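/- arXiv:2010.03309 — 6 statements merged into one kernel-verified Lean document; each statement's English description precedes it below -/
import Mathlib

section
/- For 0 < α < 1 and λ ∈ ℂ, the Riemann–Liouville fractional integral of order 1-α of the function t ↦ t^{α-1} E_{α,α}(λ t^α) equals E_{α,1}(λ t^α); that is, (1/Γ(1-α)) ∫₀^t (t-s)^{-α} s^{α-1} E_{α,α}(λ s^α) ds = E_{α,1}(λ t^α) for t > 0. -/
/-!
Expand `E_{α,α}(λ s^α)` as a power series in `s^α` and integrate termwise. Each term is a Beta
integral, `∫₀ᵗ (t-s)^{-α} s^{α(k+1)-1} ds = Γ(1-α) Γ(α(k+1)) / Γ(αk+1) · t^{αk}`, and the factor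
`Γ(α(k+1))` cancels the coefficient of `E_{α,α}`, leaving `Γ(1-α)` times the `k`-th term of
`E_{α,1}(λ t^α)`. Termwise integration is justified by absolute convergence of the Mittag-Leffler
series, which follows from the ratio test and `Γ(y) / Γ(y+α) → 0`, a consequence of the
log-convexity of `Γ`.
-/

open MeasureTheory Set Filter Topology
open scoped Interval

/-- The two-parameter Mittag-Leffler function. -/
noncomputable def mittagLeffler (α β : ℝ) (z : ℂ) : ℂ :=
  ∑' k : ℕ, z ^ k / Complex.Gamma ((α * k + β : ℝ) : ℂ)

theorem Gamma_add_one_le_Gamma_add_mul_rpow {α y : ℝ} (hα : 0 < α) (hα1 : α < 1) (hy : 0 < y) :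
    Real.Gamma (y + 1) ≤ Real.Gamma (y + α) * (y + α) ^ (1 - α) := by
  have hyα : 0 < y + α := by linarith
  have hconv := Real.Gamma_mul_add_mul_le_rpow_Gamma_mul_rpow_Gamma hyα
    (by linarith : 0 < y + α + 1) hα (by linarith : 0 < 1 - α) (by ring)
  rwa [show α * (y + α) + (1 - α) * (y + α + 1) = y + 1 by ring, Real.Gamma_add_one hyα.ne',
    Real.mul_rpow hyα.le (Real.Gamma_pos_of_pos hyα).le, ← mul_assoc, mul_right_comm,
    ← Real.rpow_add (Real.Gamma_pos_of_pos hyα), add_sub_cancel, Real.rpow_one] at hconv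

theorem tendsto_Gamma_div_Gamma_add {α : ℝ} (hα : 0 < α) (hα1 : α < 1) :
    Tendsto (fun y => Real.Gamma y / Real.Gamma (y + α)) atTop (𝓝 0) := by
  -- `(y + α) ^ (-α) * (1 + α / y) = (y + α) ^ (1 - α) / y`
  have hbound : Tendsto (fun y => (y + α) ^ (-α) * (1 + α / y)) atTop (𝓝 0) := by
    simpa using
      ((tendsto_rpow_neg_atTop hα).comp (tendsto_atTop_add_const_right _ α tendsto_id)).mul
        (tendsto_const_nhds.add (tendsto_const_nhds.div_atTop tendsto_id))
  refine tendsto_of_tendsto_of_tendsto_of_le_of_le' tendsto_const_nhds hbound ?_ ?_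
  · filter_upwards [eventually_gt_atTop 0] with y hy
    have := Real.Gamma_pos_of_pos hy
    have := Real.Gamma_pos_of_pos (add_pos hy hα)
    positivity
  · filter_upwards [eventually_gt_atTop 0] with y hy
    have hyα : 0 < y + α := by linarith
    have hgautschi := Gamma_add_one_le_Gamma_add_mul_rpow hα hα1 hy
    rw [Real.Gamma_add_one hy.ne', Real.rpow_sub hyα, Real.rpow_one] at hgautschi
    rw [div_le_iff₀ (Real.Gamma_pos_of_pos hyα), Real.rpow_neg hyα.le, ← mul_le_mul_iff_right₀ hy]
    refine hgautschi.trans_eq ?_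
    field_simp

theorem norm_pow_div_Gamma {y : ℝ} (hy : 0 < y) (z : ℂ) (k : ℕ) :
    ‖z ^ k / Complex.Gamma y‖ = ‖z‖ ^ k / Real.Gamma y := by
  rw [norm_div, norm_pow, Complex.Gamma_ofReal, Complex.norm_real, Real.norm_eq_abs,
    abs_of_pos (Real.Gamma_pos_of_pos hy)]

theorem summable_mittagLeffler {α β : ℝ} (hα : 0 < α) (hα1 : α < 1) (hβ : 0 < β) (z : ℂ) :
    Summable fun k : ℕ => z ^ k / Complex.Gamma ((α * k + β : ℝ) : ℂ) := by
  have hratio : Tendsto (fun k : ℕ => ‖z‖ * (Real.Gamma (α * k + β) / Real.Gamma (α * k + β + α)))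
      atTop (𝓝 0) := by
    simpa using ((tendsto_Gamma_div_Gamma_add hα hα1).comp (tendsto_atTop_add_const_right _ β
      (tendsto_natCast_atTop_atTop.const_mul_atTop hα))).const_mul ‖z‖
  refine summable_of_ratio_norm_eventually_le (r := 1 / 2) (by norm_num) ?_
  filter_upwards [hratio.eventually (ge_mem_nhds (by norm_num : (0 : ℝ) < 1 / 2))] with k hk
  have hy : 0 < α * k + β := by positivity
  rw [norm_pow_div_Gamma hy, norm_pow_div_Gamma (by positivity),
    show α * ↑(k + 1) + β = α * k + β + α by push_cast; ring, pow_succ]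
  calc ‖z‖ ^ k * ‖z‖ / Real.Gamma (α * k + β + α)
      = ‖z‖ * (Real.Gamma (α * k + β) / Real.Gamma (α * k + β + α)) *
          (‖z‖ ^ k / Real.Gamma (α * k + β)) := by
        have := (Real.Gamma_pos_of_pos hy).ne'
        field_simp
    _ ≤ 1 / 2 * (‖z‖ ^ k / Real.Gamma (α * k + β)) := by gcongr

theorem rpow_smul_mittagLeffler (α β : ℝ) {s : ℝ} (hs : 0 < s) (lam : ℂ) :
    s ^ (β - 1) • mittagLeffler α β (lam * (s : ℂ) ^ (α : ℂ)) =
      ∑' k : ℕ, s ^ (α * k + β - 1) • (lam ^ k / Complex.Gamma ((α * k + β : ℝ) : ℂ)) := by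
  rw [mittagLeffler, ← tsum_const_smul'']
  congr 1 with k
  rw [← Complex.ofReal_cpow hs.le, mul_pow, ← Complex.ofReal_pow, ← Real.rpow_mul_natCast hs.le,
    Complex.real_smul, Complex.real_smul, show α * k + β - 1 = α * k + (β - 1) by ring,
    Real.rpow_add hs]
  push_cast
  ring

theorem integral_sub_rpow_mul_rpow {μ ν t : ℝ} (hμ : 0 < μ) (hν : 0 < ν) (ht : 0 < t) :
    ∫ s in 0..t, (t - s) ^ (μ - 1) * s ^ (ν - 1) =
      Real.Gamma μ * Real.Gamma ν / Real.Gamma (μ + ν) * t ^ (μ + ν - 1) := by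
  apply Complex.ofReal_injective
  have hbeta := Complex.Gamma_mul_Gamma_eq_betaIntegral (s := ν) (t := μ) (by simpa) (by simpa)
  have hΓ : Complex.Gamma (ν + μ) ≠ 0 := by
    rw [← Complex.ofReal_add, Complex.Gamma_ofReal]
    exact_mod_cast (Real.Gamma_pos_of_pos (add_pos hν hμ)).ne'
  rw [← intervalIntegral.integral_ofReal]
  calc ∫ s in 0..t, (((t - s) ^ (μ - 1) * s ^ (ν - 1) : ℝ) : ℂ)
      = ∫ s in 0..t, (s : ℂ) ^ ((ν : ℂ) - 1) * ((t : ℂ) - s) ^ ((μ : ℂ) - 1) := by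
        refine intervalIntegral.integral_congr fun s hs => ?_
        rw [uIcc_of_le ht.le] at hs
        push_cast [Complex.ofReal_cpow hs.1, Complex.ofReal_cpow (sub_nonneg.2 hs.2)]
        ring
    _ = (t : ℂ) ^ ((ν : ℂ) + μ - 1) * Complex.betaIntegral ν μ := Complex.betaIntegral_scaled _ _ ht
    _ = _ := by
        rw [eq_div_of_mul_eq hΓ ((mul_comm _ _).trans hbeta.symm)]
        simp only [Complex.ofReal_mul, Complex.ofReal_div, ← Complex.Gamma_ofReal,
          Complex.ofReal_cpow ht.le]
        push_cast
        rw [add_comm (μ : ℂ)]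
        ring

theorem intervalIntegrable_sub_rpow_mul_rpow {μ ν t : ℝ} (hμ : 0 < μ) (hν : 0 < ν) (ht : 0 < t) :
    IntervalIntegrable (fun s => (t - s) ^ (μ - 1) * s ^ (ν - 1)) volume 0 t := by
  -- the integral of a non-integrable function would be `0`
  apply intervalIntegral.intervalIntegrable_of_integral_ne_zero
  rw [integral_sub_rpow_mul_rpow hμ hν ht]
  have := Real.Gamma_pos_of_pos hμ
  have := Real.Gamma_pos_of_pos hν
  have := Real.Gamma_pos_of_pos (add_pos hμ hν)
  positivity

theorem integral_tsum_sub_rpow_mul_rpow_smul {E : Type*} [NormedAddCommGroup E] [NormedSpace ℝ E]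
    [CompleteSpace E] {μ t : ℝ} {ν : ℕ → ℝ} {c : ℕ → E} (hμ : 0 < μ) (hν : ∀ k, 0 < ν k)
    (ht : 0 < t)
    (hsum : Summable fun k =>
      ‖(Real.Gamma μ * Real.Gamma (ν k) / Real.Gamma (μ + ν k) * t ^ (μ + ν k - 1)) • c k‖) :
    ∫ s in 0..t, ∑' k, ((t - s) ^ (μ - 1) * s ^ (ν k - 1)) • c k =
      ∑' k, (Real.Gamma μ * Real.Gamma (ν k) / Real.Gamma (μ + ν k) * t ^ (μ + ν k - 1)) • c k := by
  have hint k := (intervalIntegrable_sub_rpow_mul_rpow hμ (hν k) ht).1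
  have hval k : ∫ s in Ioc 0 t, (t - s) ^ (μ - 1) * s ^ (ν k - 1) =
      Real.Gamma μ * Real.Gamma (ν k) / Real.Gamma (μ + ν k) * t ^ (μ + ν k - 1) := by
    rw [← intervalIntegral.integral_of_le ht.le, integral_sub_rpow_mul_rpow hμ (hν k) ht]
  rw [intervalIntegral.integral_of_le ht.le,
    ← integral_tsum_of_summable_integral_norm (fun k => (hint k).smul_const (c k))]
  · simp only [integral_smul_const, hval]
  · have hnonneg k : ∀ s ∈ Ioc 0 t, 0 ≤ (t - s) ^ (μ - 1) * s ^ (ν k - 1) := fun s hs =>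
      mul_nonneg (Real.rpow_nonneg (sub_nonneg.2 hs.2) _) (Real.rpow_nonneg hs.1.le _)
    refine hsum.congr fun k => ?_
    rw [← hval, norm_smul, Real.norm_of_nonneg (setIntegral_nonneg measurableSet_Ioc (hnonneg k)),
      ← integral_mul_const]
    refine setIntegral_congr_fun measurableSet_Ioc fun s hs => ?_
    rw [norm_smul, Real.norm_of_nonneg (hnonneg k s hs)]

theorem integral_sub_rpow_mul_rpow_smul_mittagLeffler {α β μ t : ℝ} (hα : 0 < α) (hα1 : α < 1)
    (hβ : 0 < β) (hμ : 0 < μ) (ht : 0 < t) (lam : ℂ) :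
    ∫ s in 0..t, ((t - s) ^ (μ - 1) * s ^ (β - 1)) • mittagLeffler α β (lam * (s : ℂ) ^ (α : ℂ)) =
      (Real.Gamma μ * t ^ (μ + β - 1)) • mittagLeffler α (β + μ) (lam * (t : ℂ) ^ (α : ℂ)) := by
  have hexpand : ∀ s ∈ Ι 0 t,
      ((t - s) ^ (μ - 1) * s ^ (β - 1)) • mittagLeffler α β (lam * (s : ℂ) ^ (α : ℂ)) =
        ∑' k : ℕ, ((t - s) ^ (μ - 1) * s ^ (α * k + β - 1)) •
          (lam ^ k / Complex.Gamma ((α * k + β : ℝ) : ℂ)) := by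
    intro s hs
    rw [uIoc_of_le ht.le] at hs
    simp only [mul_smul, rpow_smul_mittagLeffler α β hs.1, ← tsum_const_smul'']
  have hterm : ∀ k : ℕ,
      (Real.Gamma μ * Real.Gamma (α * k + β) / Real.Gamma (μ + (α * k + β)) *
          t ^ (μ + (α * k + β) - 1)) • (lam ^ k / Complex.Gamma ((α * k + β : ℝ) : ℂ)) =
        (Real.Gamma μ * t ^ (μ + β - 1)) •
          ((lam * (t : ℂ) ^ (α : ℂ)) ^ k / Complex.Gamma ((α * k + (β + μ) : ℝ) : ℂ)) := by
    intro k
    have hΓ : (Real.Gamma (α * k + β) : ℂ) ≠ 0 :=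
      mod_cast (Real.Gamma_pos_of_pos (by positivity : 0 < α * k + β)).ne'
    rw [show μ + (α * k + β) = α * k + (β + μ) by ring,
      show α * k + (β + μ) - 1 = α * k + (μ + β - 1) by ring, Real.rpow_add ht,
      ← Complex.ofReal_cpow ht.le, mul_pow, ← Complex.ofReal_pow, ← Real.rpow_mul_natCast ht.le,
      Complex.Gamma_ofReal, Complex.Gamma_ofReal, Complex.real_smul, Complex.real_smul]
    push_cast
    generalize (Real.Gamma (α * k + β) : ℂ) = g at hΓ ⊢
    field_simp
  rw [intervalIntegral.integral_congr_ae (ae_of_all _ hexpand),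
    integral_tsum_sub_rpow_mul_rpow_smul hμ (fun k => by positivity) ht, funext hterm,
    tsum_const_smul'', mittagLeffler]
  simpa only [hterm] using ((summable_mittagLeffler hα hα1 (add_pos hβ hμ) _).const_smul
    (Real.Gamma μ * t ^ (μ + β - 1))).norm

/-- `J^{1-α}(t^{α-1} E_{α,α}(λ t^α)) = E_{α,1}(λ t^α)` for `0 < α < 1`. -/
theorem stmt2 (α : ℝ) (hα : 0 < α) (hα1 : α < 1) (lam : ℂ) (t : ℝ) (ht : 0 < t) :
    (1 / Real.Gamma (1 - α)) •
        ∫ s in (0:ℝ)..t,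
          ((t - s) ^ (-α) * s ^ (α - 1)) • mittagLeffler α α (lam * (s : ℂ) ^ (α : ℂ))
      = mittagLeffler α 1 (lam * (t : ℂ) ^ (α : ℂ)) := by
  have hμ : 0 < 1 - α := by linarith
  rw [show -α = 1 - α - 1 by ring, integral_sub_rpow_mul_rpow_smul_mittagLeffler hα hα1 hα hμ ht,
    show 1 - α + α - 1 = 0 by ring, show α + (1 - α) = 1 by ring, Real.rpow_zero, mul_one,
    smul_smul, one_div, inv_mul_cancel₀ (Real.Gamma_pos_of_pos hμ).ne', one_smul]
end

section
/- For 1 < γ₁ < 2, λ ≥ 0, and t > 0, the identity (1/Γ(2-γ₁)) ∫₀^t (t-s)^{1-γ₁} ∫₀^s (s-τ)^{γ₁-2} E_{γ₁,γ₁-1}(-λ (s-τ)^{γ₁}) g(τ) dτ ds = ∫₀^t E_{γ₁,1}(-λ (t-s)^{γ₁}) g(s) ds holds for every continuous bounded function g : [0,∞) → ℝ. -/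
/-- The real two-parameter Mittag-Leffler function. -/
noncomputable def mlReal (α β : ℝ) (x : ℝ) : ℝ :=
  ∑' k : ℕ, x ^ k / Real.Gamma (α * k + β)

/-!
Expand `E_{γ,γ-1}` termwise. The `k`-th term carries the kernel `(t-s)^{1-γ} (s-τ)^{γk+γ-2}`,
whose `s`-integral over `[τ, t]` is the Beta value
`Γ(2-γ) Γ(γk+γ-1) / Γ(γk+1) · (t-τ)^{γk}`; this turns the `k`-th term of `E_{γ,γ-1}` into
`Γ(2-γ)` times the `k`-th term of `E_{γ,1}`. Exchanging the order of integration over the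
triangle `0 < τ ≤ s ≤ t` (the kernel `(t-s)^{1-γ} (s-τ)^{γ-2}` is integrable there, and the
remaining factors are bounded) and the `s`-integral with the series (absolute convergence)
therefore turns the left-hand side into the right-hand side.
-/

open Real MeasureTheory Set Filter
open scoped Nat

section MittagLeffler

variable {α β : ℝ}

lemma Gamma_mul_natCast_add_pos (hα : 0 ≤ α) (hβ : 0 < β) (k : ℕ) : 0 < Gamma (α * k + β) :=
  Gamma_pos_of_pos (by positivity)

lemma summable_mlReal (hα : 1 < α) (hβ : 0 < β) (x : ℝ) :
    Summable fun k : ℕ => x ^ k / Gamma (α * k + β) := by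
  refine .of_norm_bounded_eventually_nat (Real.summable_pow_div_factorial |x|) ?_
  obtain ⟨N, hN⟩ := exists_nat_ge (1 / (α - 1))
  filter_upwards [eventually_ge_atTop (max N 1)] with k hk
  have hkN : (N : ℝ) ≤ k := by exact_mod_cast (le_max_left _ _).trans hk
  have hk1 : (1 : ℝ) ≤ k := by exact_mod_cast (le_max_right _ _).trans hk
  have hshift : (k : ℝ) + 1 ≤ α * k + β := by
    have : 1 ≤ (α - 1) * k := by
      rw [div_le_iff₀ (by linarith)] at hN
      nlinarith
    linarith
  have hfact : (k ! : ℝ) ≤ Gamma (α * k + β) := by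
    rw [← Gamma_nat_eq_factorial]
    exact Gamma_strictMonoOn_Ici.monotoneOn (mem_Ici.2 (by linarith)) (mem_Ici.2 (by linarith))
      hshift
  rw [norm_div, norm_pow, Real.norm_eq_abs,
    Real.norm_of_nonneg (Gamma_mul_natCast_add_pos (by linarith) hβ k).le]
  gcongr

lemma abs_mlReal_le (hα : 1 < α) (hβ : 0 < β) {x c : ℝ} (hx : |x| ≤ c) :
    |mlReal α β x| ≤ mlReal α β c := by
  rw [← Real.norm_eq_abs, mlReal]
  refine tsum_of_norm_bounded (summable_mlReal hα hβ c).hasSum fun k => ?_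
  rw [norm_div, norm_pow, Real.norm_eq_abs,
    Real.norm_of_nonneg (Gamma_mul_natCast_add_pos (by linarith) hβ k).le]
  gcongr

lemma measurable_mlReal (hα : 1 < α) (hβ : 0 < β) : Measurable (mlReal α β) := by
  refine measurable_of_tendsto_metrizable
    (f := fun n x => ∑ k ∈ Finset.range n, x ^ k / Gamma (α * k + β))
    (fun n => by fun_prop) (tendsto_pi_nhds.2 fun x => ?_)
  exact (summable_mlReal hα hβ x).hasSum.tendsto_sum_nat

lemma abs_mlReal_mul_rpow_le (hα : 1 < α) (hβ : 0 < β) {r c u T : ℝ} (hr : 0 ≤ r)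
    (hu : |u| ≤ T) : |mlReal α β (c * u ^ r)| ≤ mlReal α β (|c| * T ^ r) := by
  refine abs_mlReal_le hα hβ ?_
  rw [abs_mul]
  gcongr
  exact (abs_rpow_le_abs_rpow u r).trans (rpow_le_rpow (abs_nonneg u) hu hr)

end MittagLeffler

lemma integral_rpow_mul_one_sub_rpow {a b : ℝ} (ha : 0 < a) (hb : 0 < b) :
    ∫ x in (0 : ℝ)..1, x ^ (a - 1) * (1 - x) ^ (b - 1) = Gamma a * Gamma b / Gamma (a + b) := by
  apply Complex.ofReal_injective
  have hB := Complex.betaIntegral_eq_Gamma_mul_div a b (by simpa) (by simpa)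
  rw [Complex.betaIntegral, ← Complex.ofReal_add, Complex.Gamma_ofReal, Complex.Gamma_ofReal,
    Complex.Gamma_ofReal] at hB
  push_cast
  rw [← hB, ← intervalIntegral.integral_ofReal]
  refine intervalIntegral.integral_congr fun x hx => ?_
  rw [uIcc_of_le zero_le_one] at hx
  push_cast
  rw [Complex.ofReal_cpow hx.1, Complex.ofReal_cpow (sub_nonneg.2 hx.2)]
  push_cast
  rfl

lemma integral_sub_rpow_mul_sub_rpow {a b τ t : ℝ} (ha : 0 < a) (hb : 0 < b) (hτt : τ < t) :
    ∫ s in τ..t, (t - s) ^ (a - 1) * (s - τ) ^ (b - 1)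
      = Gamma a * Gamma b / Gamma (a + b) * (t - τ) ^ (a + b - 1) := by
  have hT : 0 < t - τ := sub_pos.2 hτt
  have hsub := intervalIntegral.smul_integral_comp_add_mul (a := 0) (b := 1)
    (fun s => (t - s) ^ (a - 1) * (s - τ) ^ (b - 1)) (t - τ) τ
  rw [mul_zero, add_zero, mul_one, add_sub_cancel] at hsub
  have hscaled : ∀ x ∈ uIcc (0 : ℝ) 1,
      (t - (τ + (t - τ) * x)) ^ (a - 1) * (τ + (t - τ) * x - τ) ^ (b - 1)
        = (t - τ) ^ (a + b - 2) * (x ^ (b - 1) * (1 - x) ^ (a - 1)) := by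
    intro x hx
    rw [uIcc_of_le zero_le_one] at hx
    rw [show t - (τ + (t - τ) * x) = (t - τ) * (1 - x) by ring,
      show τ + (t - τ) * x - τ = (t - τ) * x by ring, mul_rpow hT.le (sub_nonneg.2 hx.2),
      mul_rpow hT.le hx.1, show a + b - 2 = (a - 1) + (b - 1) by ring, rpow_add hT]
    ring
  rw [← hsub, smul_eq_mul, intervalIntegral.integral_congr hscaled,
    intervalIntegral.integral_const_mul, integral_rpow_mul_one_sub_rpow hb ha,
    show a + b - 1 = (a + b - 2) + 1 by ring, rpow_add_one hT.ne', add_comm b a]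
  ring

lemma integral_sub_rpow {q : ℝ} (hq : -1 < q) (a s : ℝ) :
    ∫ τ in a..s, (s - τ) ^ q = (s - a) ^ (q + 1) / (q + 1) := by
  rw [intervalIntegral.integral_comp_sub_left (fun x => x ^ q), sub_self,
    integral_rpow (.inl hq), zero_rpow (by linarith), sub_zero]

lemma intervalIntegrable_sub_rpow_mul_sub_rpow {p q τ t : ℝ} (hp : -1 < p) (hq : -1 < q)
    (hτt : τ < t) :
    IntervalIntegrable (fun s => (t - s) ^ p * (s - τ) ^ q) volume τ t := by
  set m := (τ + t) / 2
  have hτm : τ < m := by simp only [m]; linarith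
  have hmt : m < t := by simp only [m]; linarith
  refine IntervalIntegrable.trans (b := m) ?_ ?_
  · have hq' : IntervalIntegrable (fun s => (s - τ) ^ q) volume τ m := by
      simpa using
        (intervalIntegral.intervalIntegrable_rpow' (a := 0) (b := m - τ) hq).comp_sub_right τ
    have hp' : ContinuousOn (fun s => (t - s) ^ p) (uIcc τ m) := by
      refine ContinuousOn.rpow_const (by fun_prop) fun s hs => Or.inl ?_
      rw [uIcc_of_le hτm.le] at hs
      linarith [hs.2]
    simpa only [mul_comm] using hq'.mul_continuousOn hp'
  · have hp' : IntervalIntegrable (fun s => (t - s) ^ p) volume m t := by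
      simpa using
        (intervalIntegral.intervalIntegrable_rpow' (a := t - m) (b := 0) hp).comp_sub_left t
    have hq' : ContinuousOn (fun s => (s - τ) ^ q) (uIcc m t) := by
      refine ContinuousOn.rpow_const (by fun_prop) fun s hs => Or.inl ?_
      rw [uIcc_of_le hmt.le] at hs
      linarith [hs.1]
    exact hp'.mul_continuousOn hq'

section VolterraKernel

variable {γ τ t : ℝ}

lemma integral_kernel_mul_rpow (hγ1 : 1 < γ) (hγ2 : γ < 2) (hτt : τ < t) (c : ℝ) (k : ℕ) :
    ∫ s in τ..t,
        c ^ k / Gamma (γ * k + (γ - 1)) * ((t - s) ^ (1 - γ) * (s - τ) ^ (γ * k + γ - 2))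
      = Gamma (2 - γ) * ((c * (t - τ) ^ γ) ^ k / Gamma (γ * k + 1)) := by
  have hk : 0 ≤ γ * k := by positivity
  have hB := integral_sub_rpow_mul_sub_rpow (a := 2 - γ) (b := γ * k + (γ - 1))
    (by linarith) (by linarith) hτt
  rw [show 2 - γ - 1 = 1 - γ by ring, show γ * k + (γ - 1) - 1 = γ * k + γ - 2 by ring,
    show 2 - γ + (γ * k + (γ - 1)) = γ * k + 1 by ring, add_sub_cancel_right] at hB
  rw [intervalIntegral.integral_const_mul, hB, mul_pow, ← rpow_natCast ((t - τ) ^ γ),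
    ← rpow_mul (sub_pos.2 hτt).le]
  have : Gamma (γ * k + (γ - 1)) ≠ 0 := (Gamma_pos_of_pos (by linarith)).ne'
  field_simp

lemma integral_kernel_mul_mlReal (hγ1 : 1 < γ) (hγ2 : γ < 2) (hτt : τ < t) (c : ℝ) :
    ∫ s in τ..t, (t - s) ^ (1 - γ) * ((s - τ) ^ (γ - 2) * mlReal γ (γ - 1) (c * (s - τ) ^ γ))
      = Gamma (2 - γ) * mlReal γ 1 (c * (t - τ) ^ γ) := by
  set F : ℕ → ℝ → ℝ := fun k s =>
    c ^ k / Gamma (γ * k + (γ - 1)) * ((t - s) ^ (1 - γ) * (s - τ) ^ (γ * k + γ - 2))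
  have hΓ : ∀ k : ℕ, 0 < Gamma (γ * k + (γ - 1)) :=
    Gamma_mul_natCast_add_pos (by linarith) (by linarith)
  have hK : ∀ k : ℕ, IntervalIntegrable
      (fun s => (t - s) ^ (1 - γ) * (s - τ) ^ (γ * k + γ - 2)) volume τ t := fun k =>
    intervalIntegrable_sub_rpow_mul_sub_rpow (by linarith)
      (by nlinarith [k.cast_nonneg (α := ℝ)]) hτt
  have hK_nonneg : ∀ k : ℕ, ∀ s ∈ Ioc τ t,
      0 ≤ (t - s) ^ (1 - γ) * (s - τ) ^ (γ * k + γ - 2) := fun k s hs =>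
    mul_nonneg (rpow_nonneg (by linarith [hs.2]) _) (rpow_nonneg (by linarith [hs.1]) _)
  have hF_int : ∀ k, Integrable (F k) (volume.restrict (Ioc τ t)) := fun k =>
    ((intervalIntegrable_iff_integrableOn_Ioc_of_le hτt.le).1 (hK k)).const_mul _
  have hF_norm : ∀ k, ∫ s in Ioc τ t, ‖F k s‖
      = Gamma (2 - γ) * ((|c| * (t - τ) ^ γ) ^ k / Gamma (γ * k + 1)) := by
    intro k
    rw [← integral_kernel_mul_rpow hγ1 hγ2 hτt |c| k, intervalIntegral.integral_of_le hτt.le]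
    refine setIntegral_congr_fun measurableSet_Ioc fun s hs => ?_
    rw [norm_mul, norm_div, norm_pow, Real.norm_eq_abs, Real.norm_of_nonneg (hΓ k).le,
      Real.norm_of_nonneg (hK_nonneg k s hs)]
  have hF_sum : ∀ s ∈ Ioc τ t, ∑' k, F k s
      = (t - s) ^ (1 - γ) * ((s - τ) ^ (γ - 2) * mlReal γ (γ - 1) (c * (s - τ) ^ γ)) := by
    intro s hs
    have hsτ : 0 < s - τ := sub_pos.2 hs.1
    rw [mlReal, ← tsum_mul_left, ← tsum_mul_left]
    refine tsum_congr fun k => ?_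
    simp only [F]
    rw [mul_pow, ← rpow_natCast ((s - τ) ^ γ), ← rpow_mul hsτ.le,
      show γ * k + γ - 2 = (γ - 2) + γ * k by ring, rpow_add hsτ]
    ring
  calc ∫ s in τ..t, (t - s) ^ (1 - γ) * ((s - τ) ^ (γ - 2) * mlReal γ (γ - 1) (c * (s - τ) ^ γ))
      = ∫ s in Ioc τ t, ∑' k, F k s := by
        rw [intervalIntegral.integral_of_le hτt.le]
        exact (setIntegral_congr_fun measurableSet_Ioc hF_sum).symm
    _ = ∑' k, ∫ s in Ioc τ t, F k s := by
        refine (integral_tsum_of_summable_integral_norm hF_int ?_).symm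
        simp_rw [hF_norm]
        exact (summable_mlReal hγ1 one_pos _).mul_left _
    _ = Gamma (2 - γ) * mlReal γ 1 (c * (t - τ) ^ γ) := by
        simp_rw [← intervalIntegral.integral_of_le hτt.le, F, integral_kernel_mul_rpow hγ1 hγ2 hτt]
        rw [tsum_mul_left, mlReal]

end VolterraKernel

lemma integrableOn_triangle_sub_rpow_mul_sub_rpow {p q a b : ℝ} (hp : -1 < p) (hq : -1 < q)
    (hab : a < b) :
    IntegrableOn ({x : ℝ × ℝ | x.2 ≤ x.1}.indicator fun x => (b - x.1) ^ p * (x.1 - x.2) ^ q)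
      (Ioc a b ×ˢ Ioc a b) := by
  set K := {x : ℝ × ℝ | x.2 ≤ x.1}.indicator fun x => (b - x.1) ^ p * (x.1 - x.2) ^ q
  have hK : Measurable K :=
    (by fun_prop : Measurable fun x : ℝ × ℝ => (b - x.1) ^ p * (x.1 - x.2) ^ q).indicator
      (measurableSet_le measurable_snd measurable_fst)
  have hslice : ∀ s τ,
      K (s, τ) = (Iic s).indicator (fun τ => (b - s) ^ p * (s - τ) ^ q) τ := by
    intro s τ
    simp [K, indicator_apply]
  have hset : ∀ s ∈ Ioc a b, Iic s ∩ Ioc a b = Ioc a s := by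
    intro s hs
    rw [inter_comm, Ioc_inter_Iic, min_eq_right hs.2]
  have hpow : ∀ s, IntervalIntegrable (fun τ => (s - τ) ^ q) volume a s := fun s => by
    simpa using
      ((intervalIntegral.intervalIntegrable_rpow' (a := 0) (b := s - a) hq).comp_sub_left s).symm
  rw [IntegrableOn, Measure.volume_eq_prod, ← Measure.prod_restrict,
    integrable_prod_iff hK.aestronglyMeasurable]
  constructor
  · filter_upwards [ae_restrict_mem measurableSet_Ioc] with s hs
    simp only [hslice s]
    rw [integrable_indicator_iff measurableSet_Iic, IntegrableOn,
      Measure.restrict_restrict measurableSet_Iic, hset s hs]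
    exact ((intervalIntegrable_iff_integrableOn_Ioc_of_le hs.1.le).1 (hpow s)).const_mul _
  · have hmarginal := (intervalIntegrable_sub_rpow_mul_sub_rpow (q := q + 1) hp (by linarith)
      hab).div_const (q + 1)
    refine ((intervalIntegrable_iff_integrableOn_Ioc_of_le hab.le).1 hmarginal).congr ?_
    filter_upwards [ae_restrict_mem measurableSet_Ioc] with s hs
    have hnonneg : ∀ τ ∈ Ioc a s, ‖(b - s) ^ p * (s - τ) ^ q‖ = (b - s) ^ p * (s - τ) ^ q :=
      fun τ hτ => Real.norm_of_nonneg
        (mul_nonneg (rpow_nonneg (by linarith [hs.2]) _) (rpow_nonneg (by linarith [hτ.2]) _))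
    simp only [hslice s, norm_indicator_eq_indicator_norm]
    rw [integral_indicator measurableSet_Iic, Measure.restrict_restrict measurableSet_Iic,
      hset s hs, setIntegral_congr_fun measurableSet_Ioc hnonneg, integral_const_mul,
      ← intervalIntegral.integral_of_le hs.1.le, integral_sub_rpow hq, mul_div_assoc]

lemma integral_integral_swap_triangle {F : ℝ → ℝ → ℝ} {a b : ℝ} (hab : a ≤ b)
    (hF : IntegrableOn ({p : ℝ × ℝ | p.2 ≤ p.1}.indicator (Function.uncurry F))
      (Ioc a b ×ˢ Ioc a b)) :
    ∫ s in a..b, ∫ τ in a..s, F s τ = ∫ τ in a..b, ∫ s in τ..b, F s τ := by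
  set G := {p : ℝ × ℝ | p.2 ≤ p.1}.indicator (Function.uncurry F)
  have hlower : ∀ s ∈ Ioc a b, ∫ τ in a..s, F s τ = ∫ τ in a..b, G (s, τ) := by
    intro s hs
    have hslice : (fun τ => G (s, τ)) = (Iic s).indicator (F s) := by
      ext τ; simp [G, indicator_apply]
    have hset : Iic s ∩ Ioc a b = Ioc a s := by
      rw [inter_comm, Ioc_inter_Iic, min_eq_right hs.2]
    rw [intervalIntegral.integral_of_le hs.1.le, intervalIntegral.integral_of_le hab, hslice,
      integral_indicator measurableSet_Iic, Measure.restrict_restrict measurableSet_Iic, hset]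
  have hupper : ∀ τ ∈ Ioc a b, ∫ s in a..b, G (s, τ) = ∫ s in τ..b, F s τ := by
    intro τ hτ
    have hslice : (fun s => G (s, τ)) = (Ici τ).indicator (fun s => F s τ) := by
      ext s; simp [G, indicator_apply]
    have hset : Ici τ ∩ Ioc a b = Icc τ b := by
      ext s; simp only [mem_inter_iff, mem_Ici, mem_Ioc, mem_Icc]
      constructor
      · rintro ⟨hτs, -, hsb⟩; exact ⟨hτs, hsb⟩
      · rintro ⟨hτs, hsb⟩; exact ⟨hτs, hτ.1.trans_le hτs, hsb⟩
    rw [intervalIntegral.integral_of_le hτ.2, intervalIntegral.integral_of_le hab, hslice,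
      integral_indicator measurableSet_Ici, Measure.restrict_restrict measurableSet_Ici, hset,
      integral_Icc_eq_integral_Ioc]
  calc ∫ s in a..b, ∫ τ in a..s, F s τ = ∫ s in a..b, ∫ τ in a..b, G (s, τ) :=
        intervalIntegral.integral_congr_ae
          (.of_forall fun s hs => hlower s (by rwa [uIoc_of_le hab] at hs))
    _ = ∫ τ in a..b, ∫ s in a..b, G (s, τ) :=
        intervalIntegral_intervalIntegral_swap (by rw [uIoc_of_le hab]; exact hF)
    _ = ∫ τ in a..b, ∫ s in τ..b, F s τ :=
        intervalIntegral.integral_congr_ae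
          (.of_forall fun τ hτ => hupper τ (by rwa [uIoc_of_le hab] at hτ))

lemma integrableOn_triangle_kernel_mul_mlReal {γ a t : ℝ} (hγ1 : 1 < γ) (hγ2 : γ < 2)
    (hat : a < t) (c : ℝ) {g : ℝ → ℝ} (hg : Continuous g) :
    IntegrableOn ({x : ℝ × ℝ | x.2 ≤ x.1}.indicator (Function.uncurry fun s τ =>
      (t - s) ^ (1 - γ) * ((s - τ) ^ (γ - 2) * mlReal γ (γ - 1) (c * (s - τ) ^ γ) * g τ)))
      (Ioc a t ×ˢ Ioc a t) := by
  obtain ⟨M, hM⟩ := isCompact_Icc.exists_bound_of_continuousOn (hg.continuousOn (s := Icc a t))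
  have hfactor : {x : ℝ × ℝ | x.2 ≤ x.1}.indicator (Function.uncurry fun s τ =>
      (t - s) ^ (1 - γ) * ((s - τ) ^ (γ - 2) * mlReal γ (γ - 1) (c * (s - τ) ^ γ) * g τ))
      = fun x => {x : ℝ × ℝ | x.2 ≤ x.1}.indicator
          (fun x => (t - x.1) ^ (1 - γ) * (x.1 - x.2) ^ (γ - 2)) x
        * (mlReal γ (γ - 1) (c * (x.1 - x.2) ^ γ) * g x.2) := by
    ext ⟨s, τ⟩
    by_cases hsτ : τ ≤ s <;> simp [hsτ]
    ring
  rw [hfactor]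
  refine (integrableOn_triangle_sub_rpow_mul_sub_rpow (by linarith) (by linarith) hat).mul_bdd
    (c := mlReal γ (γ - 1) (|c| * (t - a) ^ γ) * M) ?_ ?_
  · exact (((measurable_mlReal hγ1 (by linarith)).comp (by fun_prop)).mul
      (hg.measurable.comp measurable_snd)).aestronglyMeasurable
  · filter_upwards [ae_restrict_mem (measurableSet_Ioc.prod measurableSet_Ioc)] with x hx
    obtain ⟨hs, hτ⟩ := hx
    have hdist : |x.1 - x.2| ≤ t - a :=
      abs_sub_le_iff.2 ⟨by linarith [hs.2, hτ.1], by linarith [hs.1, hτ.2]⟩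
    have hE := abs_mlReal_mul_rpow_le (β := γ - 1) hγ1 (by linarith) (c := c) (r := γ)
      (by linarith) hdist
    rw [norm_mul, Real.norm_eq_abs]
    exact mul_le_mul hE (hM x.2 (Ioc_subset_Icc_self hτ)) (norm_nonneg _) ((abs_nonneg _).trans hE)

theorem stmt3_general (γ₁ lam : ℝ) (hγ1 : 1 < γ₁) (hγ2 : γ₁ < 2)
    (g : ℝ → ℝ) (hg : Continuous g)
    (t : ℝ) (ht : 0 < t) :
    (1 / Real.Gamma (2 - γ₁)) *
        ∫ s in (0:ℝ)..t, (t - s) ^ (1 - γ₁) *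
          ∫ τ in (0:ℝ)..s,
            (s - τ) ^ (γ₁ - 2) * mlReal γ₁ (γ₁ - 1) (-lam * (s - τ) ^ γ₁) * g τ
      = ∫ s in (0:ℝ)..t, mlReal γ₁ 1 (-lam * (t - s) ^ γ₁) * g s := by
  have hΓ : Gamma (2 - γ₁) ≠ 0 := (Gamma_pos_of_pos (by linarith)).ne'
  have hinner : ∀ᵐ τ, τ ∈ uIoc 0 t →
      ∫ s in τ..t, (t - s) ^ (1 - γ₁) *
          ((s - τ) ^ (γ₁ - 2) * mlReal γ₁ (γ₁ - 1) (-lam * (s - τ) ^ γ₁) * g τ)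
        = Gamma (2 - γ₁) * (mlReal γ₁ 1 (-lam * (t - τ) ^ γ₁) * g τ) := by
    -- at `τ = t` the `s`-integral is over an empty interval
    filter_upwards [(by simp [ae_iff, measure_singleton] : ∀ᵐ τ : ℝ, τ ≠ t)] with τ hτt hτ
    rw [uIoc_of_le ht.le] at hτ
    calc _ = (∫ s in τ..t, (t - s) ^ (1 - γ₁) *
            ((s - τ) ^ (γ₁ - 2) * mlReal γ₁ (γ₁ - 1) (-lam * (s - τ) ^ γ₁))) * g τ := by
          rw [← intervalIntegral.integral_mul_const]
          congr 1 with s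
          ring
      _ = _ := by
          rw [integral_kernel_mul_mlReal hγ1 hγ2 (hτ.2.lt_of_ne hτt), mul_assoc]
  calc _ = 1 / Gamma (2 - γ₁) * ∫ s in (0:ℝ)..t, ∫ τ in (0:ℝ)..s, (t - s) ^ (1 - γ₁) *
          ((s - τ) ^ (γ₁ - 2) * mlReal γ₁ (γ₁ - 1) (-lam * (s - τ) ^ γ₁) * g τ) := by
        simp_rw [intervalIntegral.integral_const_mul]
    _ = 1 / Gamma (2 - γ₁) * ∫ τ in (0:ℝ)..t, ∫ s in τ..t, (t - s) ^ (1 - γ₁) *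
          ((s - τ) ^ (γ₁ - 2) * mlReal γ₁ (γ₁ - 1) (-lam * (s - τ) ^ γ₁) * g τ) := by
        rw [integral_integral_swap_triangle ht.le
          (integrableOn_triangle_kernel_mul_mlReal hγ1 hγ2 ht (-lam) hg)]
    _ = 1 / Gamma (2 - γ₁) * ∫ τ in (0:ℝ)..t,
          Gamma (2 - γ₁) * (mlReal γ₁ 1 (-lam * (t - τ) ^ γ₁) * g τ) := by
        rw [intervalIntegral.integral_congr_ae hinner]
    _ = _ := by
        rw [intervalIntegral.integral_const_mul]
        field_simp

/-- The identity
`(1/Γ(2-γ₁)) ∫₀^t (t-s)^{1-γ₁} ∫₀^s (s-τ)^{γ₁-2} E_{γ₁,γ₁-1}(-λ(s-τ)^{γ₁}) g(τ) dτ ds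
  = ∫₀^t E_{γ₁,1}(-λ(t-s)^{γ₁}) g(s) ds`. -/
theorem stmt3 (γ₁ lam : ℝ) (hγ1 : 1 < γ₁) (hγ2 : γ₁ < 2) (hlam : 0 ≤ lam)
    (g : ℝ → ℝ) (hg : Continuous g) (hgb : ∃ M, ∀ x, |g x| ≤ M)
    (t : ℝ) (ht : 0 < t) :
    (1 / Real.Gamma (2 - γ₁)) *
        ∫ s in (0:ℝ)..t, (t - s) ^ (1 - γ₁) *
          ∫ τ in (0:ℝ)..s,
            (s - τ) ^ (γ₁ - 2) * mlReal γ₁ (γ₁ - 1) (-lam * (s - τ) ^ γ₁) * g τ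
      = ∫ s in (0:ℝ)..t, mlReal γ₁ 1 (-lam * (t - s) ^ γ₁) * g s :=
  stmt3_general γ₁ lam hγ1 hγ2 g hg t ht
end

section
/- Fix 1 < α < 2 and the dimension N = 1. Suppose K : (0,∞) × ℝ^N → ℝ satisfies |K(t,x)| ≤ |x|^{-N} exp(-c (t^{-α}|x|²)^{1/(2-α)}) when |x|² t^{-α} ≥ 1 and |K(t,x)| ≤ t^{-αN/2} when |x|² t^{-α} < 1, for some c > 0. Then there exists a constant C > 0 independent of t such that ∫_{ℝ^N} |K(t,x)| dx ≤ C for all t > 0. -/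
open MeasureTheory Real Set

lemma myexp_integrable {b : ℝ} (hb : 0 < b) :
    Integrable (fun y : ℝ => Real.exp (-b * |y|)) := by
  have h1 : IntegrableOn (fun y : ℝ => Real.exp (-b * |y|)) (Ioi 0) :=
    (exp_neg_integrableOn_Ioi 0 hb).congr_fun
      (fun y hy => by rw [abs_of_pos hy]) measurableSet_Ioi
  have h2 : IntegrableOn (fun y : ℝ => Real.exp (-b * |y|)) (Iic 0) := by
    rw [← Measure.map_neg_eq_self (volume : Measure ℝ)]
    have m : MeasurableEmbedding fun x : ℝ => -x := (Homeomorph.neg ℝ).measurableEmbedding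
    rw [m.integrableOn_map_iff]
    simp_rw [Function.comp_def, abs_neg, Set.neg_preimage, Set.neg_Iic, neg_zero]
    exact Iff.mpr integrableOn_Ici_iff_integrableOn_Ioi h1
  have := h2.union h1
  rwa [Set.Iic_union_Ioi, integrableOn_univ] at this

lemma myexp_integral {b : ℝ} (hb : 0 < b) :
    ∫ y : ℝ, Real.exp (-b * |y|) = 2 * b⁻¹ := by
  rw [integral_comp_abs (f := fun r => Real.exp (-b * r))]
  have : ∫ x in Ioi (0:ℝ), Real.exp (-b * x) = b⁻¹ := by
    have h := integral_exp_neg_mul_rpow one_pos hb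
    simp only [Real.rpow_one] at h
    rw [h]
    norm_num
    exact Real.rpow_neg_one b
  rw [this]


/-- Uniform-in-time `L¹` bound for a kernel with Mittag-Leffler-type pointwise
estimates, in dimension `N < 2` (i.e. `N = 1`). -/
theorem stmt6 (N : ℕ) (hN1 : 1 ≤ N) (hN : N < 2) (α c : ℝ)
    (hα1 : 1 < α) (hα2 : α < 2) (hc : 0 < c)
    (K : ℝ → EuclideanSpace ℝ (Fin N) → ℝ)
    (hK1 : ∀ t > (0:ℝ), ∀ x, 1 ≤ ‖x‖ ^ 2 * t ^ (-α) →
      |K t x| ≤ ‖x‖ ^ (-(N:ℝ)) * Real.exp (-c * (t ^ (-α) * ‖x‖ ^ 2) ^ (1 / (2 - α))))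
    (hK2 : ∀ t > (0:ℝ), ∀ x, ‖x‖ ^ 2 * t ^ (-α) < 1 →
      |K t x| ≤ t ^ (-(α * N / 2))) :
    ∃ C > (0:ℝ), ∀ t > (0:ℝ), ∫ x, |K t x| ≤ C := by
  obtain rfl : N = 1 := by omega
  refine ⟨2 * Real.exp c / c, by positivity, fun t ht => ?_⟩
  set a : ℝ := t ^ (-(α/2)) with ha
  have hapos : 0 < a := Real.rpow_pos_of_pos ht _
  have haa : a * a = t ^ (-α) := by
    rw [ha, ← Real.rpow_add ht]; ring_nf
  -- pointwise bound
  have hpt : ∀ x : EuclideanSpace ℝ (Fin 1),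
      |K t x| ≤ a * Real.exp c * Real.exp (-(c * a) * ‖x‖) := by
    intro x
    rcases le_or_gt 1 (‖x‖ ^ 2 * t ^ (-α)) with hx | hx
    · -- outer region
      have h1 : 1 ≤ a * ‖x‖ := by
        nlinarith [mul_nonneg hapos.le (norm_nonneg x)]
      have hxpos : 0 < ‖x‖ := by
        rcases (norm_nonneg x).lt_or_eq with h | h
        · exact h
        · exfalso; rw [← h] at h1; simp at h1; linarith
      have hinv : ‖x‖⁻¹ ≤ a := by
        nlinarith [mul_inv_cancel₀ hxpos.ne', inv_pos.mpr hxpos,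
          mul_nonneg (sub_nonneg.mpr h1) (inv_pos.mpr hxpos).le]
      have hD : (1:ℝ) ≤ t ^ (-α) * ‖x‖ ^ 2 := by linarith [hx]
      have hhalf : (t ^ (-α) * ‖x‖ ^ 2) ^ ((1:ℝ)/2) = a * ‖x‖ := by
        rw [Real.mul_rpow (by positivity) (by positivity)]
        congr 1
        · rw [← Real.rpow_mul ht.le]
          congr 1; ring
        · rw [← Real.rpow_natCast ‖x‖ 2, ← Real.rpow_mul (norm_nonneg x)]
          norm_num
      have hB : a * ‖x‖ ≤ (t ^ (-α) * ‖x‖ ^ 2) ^ (1 / (2 - α)) := by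
        calc a * ‖x‖ = (t ^ (-α) * ‖x‖ ^ 2) ^ ((1:ℝ)/2) := hhalf.symm
          _ ≤ _ := Real.rpow_le_rpow_of_exponent_le hD
              (by
                have h2α : (0:ℝ) < 2 - α := by linarith
                have := one_div_le_one_div_of_le h2α (by linarith : 2 - α ≤ 2)
                linarith)
      have hexp : Real.exp (-c * (t ^ (-α) * ‖x‖ ^ 2) ^ (1 / (2 - α)))
          ≤ Real.exp c * Real.exp (-(c * a) * ‖x‖) := by
        have h2 : Real.exp (-c * (t ^ (-α) * ‖x‖ ^ 2) ^ (1 / (2 - α)))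
            ≤ Real.exp (-(c * a) * ‖x‖) := by
          apply Real.exp_le_exp.mpr
          nlinarith [mul_le_mul_of_nonneg_left hB hc.le]
        calc _ ≤ Real.exp (-(c * a) * ‖x‖) := h2
          _ ≤ _ := le_mul_of_one_le_left (Real.exp_nonneg _) (Real.one_le_exp hc.le)
      have hb := hK1 t ht x (by simpa using hx)
      rw [Nat.cast_one, Real.rpow_neg_one] at hb
      calc |K t x| ≤ ‖x‖⁻¹ * Real.exp (-c * (t ^ (-α) * ‖x‖ ^ 2) ^ (1 / (2 - α))) := hb
        _ ≤ a * (Real.exp c * Real.exp (-(c * a) * ‖x‖)) :=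
            mul_le_mul hinv hexp (Real.exp_nonneg _) hapos.le
        _ = a * Real.exp c * Real.exp (-(c * a) * ‖x‖) := by ring
    · -- inner region
      have hb := hK2 t ht x hx
      have heq : t ^ (-(α * (1:ℕ) / 2)) = a := by
        rw [ha]; congr 1; push_cast; ring
      rw [heq] at hb
      have hax : a * ‖x‖ ≤ 1 := by
        nlinarith [mul_nonneg hapos.le (norm_nonneg x)]
      have : (1:ℝ) ≤ Real.exp c * Real.exp (-(c * a) * ‖x‖) := by
        rw [← Real.exp_add]
        apply Real.one_le_exp
        nlinarith
      calc |K t x| ≤ a := hb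
        _ ≤ a * Real.exp c * Real.exp (-(c * a) * ‖x‖) := by
            nlinarith [Real.exp_nonneg c, Real.exp_nonneg (-(c * a) * ‖x‖)]
  -- transfer the integral to ℝ
  have hca : (0:ℝ) < c * a := by positivity
  let e : EuclideanSpace ℝ (Fin 1) ≃ᵐ ℝ :=
    (MeasurableEquiv.toLp 2 (Fin 1 → ℝ)).symm.trans (MeasurableEquiv.funUnique (Fin 1) ℝ)
  have hmp : MeasurePreserving e volume volume :=
    (volume_preserving_funUnique (Fin 1) ℝ).comp
      (EuclideanSpace.volume_preserving_symm_measurableEquiv_toLp (Fin 1))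
  have hnorm : ∀ y : ℝ, ‖e.symm y‖ = |y| := by
    intro y
    have hy : (e.symm y) 0 = y := rfl
    rw [EuclideanSpace.norm_eq]
    simp [hy, Real.sqrt_sq_eq_abs]
  have h0 : Integrable (fun y : ℝ => a * Real.exp c * Real.exp (-(c * a) * |y|)) :=
    (myexp_integrable hca).const_mul _
  have hint : Integrable
      (fun x : EuclideanSpace ℝ (Fin 1) => a * Real.exp c * Real.exp (-(c * a) * ‖x‖)) := by
    rw [← (MeasurePreserving.symm e hmp).integrable_comp_emb e.symm.measurableEmbedding]
    refine h0.congr (Filter.Eventually.of_forall fun y => ?_)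
    simp [Function.comp, hnorm y]
  have hIval : ∫ x : EuclideanSpace ℝ (Fin 1),
      a * Real.exp c * Real.exp (-(c * a) * ‖x‖) = 2 * Real.exp c / c := by
    rw [← (MeasurePreserving.symm e hmp).integral_comp e.symm.measurableEmbedding]
    simp_rw [hnorm]
    rw [MeasureTheory.integral_const_mul, myexp_integral hca]
    field_simp
  calc ∫ x, |K t x| ≤ ∫ x : EuclideanSpace ℝ (Fin 1),
        a * Real.exp c * Real.exp (-(c * a) * ‖x‖) :=
      integral_mono_of_nonneg (Filter.Eventually.of_forall fun x => abs_nonneg _) hint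
        (Filter.Eventually.of_forall hpt)
    _ = 2 * Real.exp c / c := hIval
end

section
/- Let 1 < α < 2, N > 2, and suppose K : (0,∞) × ℝ^N → ℝ satisfies |K(t,x)| ≤ |x|^{-N} exp(-c(t^{-α}|x|²)^{1/(2-α)}) for |x|² t^{-α} ≥ 1 and |K(t,x)| ≤ |x|^{-N+2} t^{-α} for |x|² t^{-α} < 1. Then for any p₂ with 1 ≤ p₂ < N/(N-2) there is C > 0 such that ‖K(t,·)‖_{L^{p₂}(ℝ^N)} ≤ C t^{-(α/2) N (1 - 1/p₂)} for all t > 0. -/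
open MeasureTheory Metric Real Module

/-!
In the parabolic variable `y = t^{-α/2} x` both bounds on `K(t, x)` become `t^{-αN/2}` times a
fixed profile of `y`: `|y|^{2-N}` on the unit ball and, since `|y|² ≤ (|y|²)^{1/(2-α)}` off it,
the Gaussian `exp(-c|y|²)`. The `p₂`-th power of this profile is integrable because
`(N-2)p₂ < N`, and the change of variables `x ↦ t^{-α/2} x` turns the `L^{p₂}` norm of
`t^{-αN/2}` times the profile into `t^{-αN/2 + αN/(2p₂)}` times a constant.
-/

noncomputable def kernelProfile {E : Type*} [Norm E] (d c : ℝ) (y : E) : ℝ :=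
  if ‖y‖ < 1 then ‖y‖ ^ (-d + 2) else exp (-c * ‖y‖ ^ 2)

section NormedSpace

variable {E : Type*} [NormedAddCommGroup E]

lemma kernelProfile_nonneg (d c : ℝ) (y : E) : 0 ≤ kernelProfile d c y := by
  unfold kernelProfile
  split_ifs <;> positivity

variable [NormedSpace ℝ E]

lemma abs_le_mul_kernelProfile {k : E → ℝ} {d q c R : ℝ} (hd : 0 ≤ d) (hq : 1 ≤ q)
    (hc : 0 ≤ c) (hR : 0 < R)
    (hk_far : ∀ x, 1 ≤ ‖x‖ ^ 2 * R ^ 2 →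
      |k x| ≤ ‖x‖ ^ (-d) * exp (-c * (R ^ 2 * ‖x‖ ^ 2) ^ q))
    (hk_near : ∀ x, ‖x‖ ^ 2 * R ^ 2 < 1 → |k x| ≤ ‖x‖ ^ (-d + 2) * R ^ 2) (x : E) :
    |k x| ≤ R ^ d * kernelProfile d c (R • x) := by
  have hnorm : ‖R • x‖ = R * ‖x‖ := by rw [norm_smul, norm_of_nonneg hR.le]
  have hsq : ‖x‖ ^ 2 * R ^ 2 = ‖R • x‖ ^ 2 := by rw [hnorm]; ring
  have hrescale : ∀ a : ℝ, ‖x‖ ^ a = R ^ (-a) * ‖R • x‖ ^ a := fun a => by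
    rw [hnorm, mul_rpow hR.le (norm_nonneg x), ← mul_assoc, ← rpow_add hR, neg_add_cancel,
      rpow_zero, one_mul]
  unfold kernelProfile
  split_ifs with hy
  · calc |k x| ≤ ‖x‖ ^ (-d + 2) * R ^ 2 :=
          hk_near x (by rw [hsq]; exact pow_lt_one₀ (norm_nonneg _) hy two_ne_zero)
      _ = R ^ d * ‖R • x‖ ^ (-d + 2) := by
        rw [hrescale, neg_add, neg_neg, rpow_add hR, rpow_neg hR.le, rpow_two]
        field_simp
  · have hy1 : 1 ≤ ‖R • x‖ := not_lt.1 hy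
    calc |k x| ≤ ‖x‖ ^ (-d) * exp (-c * (R ^ 2 * ‖x‖ ^ 2) ^ q) :=
          hk_far x (by rw [hsq]; exact one_le_pow₀ hy1)
      _ = R ^ d * (‖R • x‖ ^ (-d) * exp (-c * (‖R • x‖ ^ 2) ^ q)) := by
        rw [hrescale (-d), neg_neg, mul_comm (R ^ 2), hsq, mul_assoc]
      _ ≤ R ^ d * (1 * exp (-c * ‖R • x‖ ^ 2)) := by
        have hexp : exp (-c * (‖R • x‖ ^ 2) ^ q) ≤ exp (-c * ‖R • x‖ ^ 2) :=
          exp_le_exp.2 <| mul_le_mul_of_nonpos_left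
            (self_le_rpow_of_one_le (one_le_pow₀ hy1) hq) (neg_nonpos.2 hc)
        gcongr
        exact rpow_le_one_of_one_le_of_nonpos hy1 (neg_nonpos.2 hd)
      _ = R ^ d * exp (-c * ‖R • x‖ ^ 2) := by rw [one_mul]

end NormedSpace

section AddHaar

variable {E : Type*} [NormedAddCommGroup E] [NormedSpace ℝ E] [FiniteDimensional ℝ E]
  [MeasurableSpace E] [BorelSpace E] {μ : Measure E} [μ.IsAddHaarMeasure]

lemma integral_abs_rpow_rpow_le_of_abs_le_mul_comp_smul {F h : E → ℝ} {A R p : ℝ}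
    (hA : 0 ≤ A) (hR : 0 < R) (hp : 0 < p) (hh : ∀ y, 0 ≤ h y)
    (hint : Integrable (fun y => h y ^ p) μ) (hF : ∀ x, |F x| ≤ A * h (R • x)) :
    (∫ x, |F x| ^ p ∂μ) ^ (1 / p) ≤
      A * R ^ (-(finrank ℝ E : ℝ) / p) * (∫ y, h y ^ p ∂μ) ^ (1 / p) := by
  have hpow : ∀ x, |F x| ^ p ≤ A ^ p * h (R • x) ^ p := fun x => by
    rw [← mul_rpow hA (hh _)]
    exact rpow_le_rpow (abs_nonneg _) (hF x) hp.le
  have hscale : ∫ x, A ^ p * h (R • x) ^ p ∂μ =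
      A ^ p * (R ^ finrank ℝ E)⁻¹ * ∫ y, h y ^ p ∂μ := by
    rw [integral_const_mul,
      Measure.integral_comp_smul_of_nonneg μ (fun y => h y ^ p) R (hR := hR.le), smul_eq_mul,
      mul_assoc]
  have hmono : ∫ x, |F x| ^ p ∂μ ≤ A ^ p * (R ^ finrank ℝ E)⁻¹ * ∫ y, h y ^ p ∂μ :=
    hscale ▸ integral_mono_of_nonneg (ae_of_all _ fun x => by positivity)
      ((hint.comp_smul hR.ne').const_mul _) (ae_of_all _ hpow)
  calc (∫ x, |F x| ^ p ∂μ) ^ (1 / p)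
      ≤ (A ^ p * (R ^ finrank ℝ E)⁻¹ * ∫ y, h y ^ p ∂μ) ^ (1 / p) :=
        rpow_le_rpow (integral_nonneg fun x => by positivity) hmono (by positivity)
    _ = A * R ^ (-(finrank ℝ E : ℝ) / p) * (∫ y, h y ^ p ∂μ) ^ (1 / p) := by
        rw [mul_rpow (by positivity) (integral_nonneg fun y => rpow_nonneg (hh y) p),
          mul_rpow (by positivity) (by positivity), ← rpow_mul hA, mul_one_div_cancel hp.ne',
          rpow_one, ← rpow_natCast, ← rpow_neg hR.le, ← rpow_mul hR.le, neg_mul, mul_one_div,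
          neg_div]

end AddHaar

section InnerProductSpace

variable {V : Type*} [NormedAddCommGroup V] [InnerProductSpace ℝ V] [FiniteDimensional ℝ V]
  [MeasurableSpace V] [BorelSpace V] [Nontrivial V]

lemma integrable_kernelProfile_rpow {d c p : ℝ} (hc : 0 < c) (hp : 0 < p)
    (hdp : (d - 2) * p < finrank ℝ V) :
    Integrable (fun y : V => kernelProfile d c y ^ p) := by
  have hmeas : Measurable fun y : V => kernelProfile d c y ^ p :=
    (Measurable.ite (measurableSet_lt measurable_norm measurable_const)
      (measurable_norm.pow_const _) (by fun_prop)).pow_const p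
  rw [← integrableOn_univ, ← Set.union_compl_self (ball (0 : V) 1)]
  refine IntegrableOn.union ?_ ?_
  · refine integrableOn_ball_of_norm_le_rpow (C := 1) finrank_pos hdp ?_
      hmeas.aestronglyMeasurable
    filter_upwards [ae_restrict_mem measurableSet_ball] with y hy
    rw [kernelProfile, if_pos (mem_ball_zero_iff.1 hy), norm_of_nonneg (by positivity),
      ← rpow_mul (norm_nonneg y), one_mul, show (-d + 2) * p = -((d - 2) * p) by ring]
  · have hgauss : Integrable fun y : V => exp (-(c * p) * ‖y‖ ^ 2) := by
      have hb : 0 < ((c * p : ℝ) : ℂ).re := by simpa using mul_pos hc hp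
      refine (GaussianFourier.integrable_cexp_neg_mul_sq_norm_add hb 0 (0 : V)).norm.congr
        (ae_of_all _ fun y => ?_)
      simp [Complex.norm_exp, ← Complex.ofReal_pow]
    refine hgauss.integrableOn.congr_fun (fun y hy => ?_) measurableSet_ball.compl
    rw [kernelProfile, if_neg (by simpa using hy), ← exp_mul]
    ring_nf

end InnerProductSpace

/-- `L^{p₂}` decay of the kernel `Ẽ_{α,α}(t,·)` in dimension `N > 2`,
for `1 ≤ p₂ < N/(N-2)`. -/
theorem stmt7 (N : ℕ) (hN : 2 < N) (α c p₂ : ℝ)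
    (hα1 : 1 < α) (hα2 : α < 2) (hc : 0 < c)
    (hp1 : 1 ≤ p₂) (hp2 : p₂ < (N : ℝ) / ((N : ℝ) - 2))
    (K : ℝ → EuclideanSpace ℝ (Fin N) → ℝ)
    (hK1 : ∀ t > (0:ℝ), ∀ x, 1 ≤ ‖x‖ ^ 2 * t ^ (-α) →
      |K t x| ≤ ‖x‖ ^ (-(N:ℝ)) * Real.exp (-c * (t ^ (-α) * ‖x‖ ^ 2) ^ (1 / (2 - α))))
    (hK2 : ∀ t > (0:ℝ), ∀ x, ‖x‖ ^ 2 * t ^ (-α) < 1 →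
      |K t x| ≤ ‖x‖ ^ (-(N:ℝ) + 2) * t ^ (-α)) :
    ∃ C > (0:ℝ), ∀ t > (0:ℝ),
      (∫ x, |K t x| ^ p₂) ^ (1 / p₂) ≤ C * t ^ (-(α / 2) * N * (1 - 1 / p₂)) := by
  have hp : 0 < p₂ := by linarith
  have hN2 : (0 : ℝ) < N - 2 := sub_pos.2 (by exact_mod_cast hN)
  have hdim : ((N : ℝ) - 2) * p₂ < finrank ℝ (EuclideanSpace ℝ (Fin N)) := by
    rwa [finrank_euclideanSpace_fin, ← lt_div_iff₀' hN2]
  have : Nonempty (Fin N) := ⟨⟨0, by omega⟩⟩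
  set B := (∫ y : EuclideanSpace ℝ (Fin N), kernelProfile N c y ^ p₂) ^ (1 / p₂)
  have hB : 0 ≤ B :=
    rpow_nonneg (integral_nonneg fun y => rpow_nonneg (kernelProfile_nonneg _ _ y) _) _
  refine ⟨B + 1, by positivity, fun t ht => ?_⟩
  set R := t ^ (-(α / 2))
  have hR : 0 < R := rpow_pos_of_pos ht _
  have hRsq : t ^ (-α) = R ^ 2 := by
    rw [← rpow_natCast, ← rpow_mul ht.le]
    ring_nf
  have hq : 1 ≤ 1 / (2 - α) := by rw [le_div_iff₀ (by linarith)]; linarith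
  have hbound := abs_le_mul_kernelProfile (k := K t) N.cast_nonneg hq hc.le hR
    (by simpa only [hRsq] using hK1 t ht) (by simpa only [hRsq] using hK2 t ht)
  calc (∫ x, |K t x| ^ p₂) ^ (1 / p₂)
      ≤ R ^ (N : ℝ) * R ^ (-(N : ℝ) / p₂) * B := by
        simpa only [finrank_euclideanSpace_fin] using
          integral_abs_rpow_rpow_le_of_abs_le_mul_comp_smul (by positivity) hR hp
            (kernelProfile_nonneg _ _) (integrable_kernelProfile_rpow hc hp hdim) hbound
    _ = t ^ (-(α / 2) * N * (1 - 1 / p₂)) * B := by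
        rw [← rpow_add hR, ← rpow_mul ht.le]
        ring_nf
    _ ≤ (B + 1) * t ^ (-(α / 2) * N * (1 - 1 / p₂)) := by
        rw [mul_comm]
        gcongr
        linarith
end

section
/- With the iterative scheme 1/s_i' = p/s_{i-1}'' - 2/N + η and 1/s_i'' = q/s_{i-1}' - 2/N + η for i ≥ 2 (pq > 1, η > 0, N > 0), and assuming 1/s₁' > 1/s₂' > 0, 1/s₁'' > 1/s₂'' > 0, there exists an index i₀ ≥ 2 such that p/s_{i₀}'' < 2/N or q/s_{i₀}' < 2/N. -/
/-!
The differences `x i - x (i+1)`, `y i - y (i+1)` satisfy the linear cross recurrence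
`a (k+1) = p b k`, `b (k+1) = q a k`. Starting positive they stay positive, so `x` decreases,
and every second step multiplies them by `p q > 1`, so the steps of `x` are unbounded and
`x → -∞`. If the threshold `2/N` were never beaten, `p y (i-1) ≥ 2/N` would instead give
`x i ≥ η` for `i ≥ 3`.
-/

open Filter

section CrossRecurrence

variable {p q : ℝ} {a b : ℕ → ℝ}

lemma pos_of_cross_recurrence (hp : 0 < p) (hq : 0 < q)
    (ha : ∀ k, a (k + 1) = p * b k) (hb : ∀ k, b (k + 1) = q * a k)
    (ha₀ : 0 < a 0) (hb₀ : 0 < b 0) (k : ℕ) : 0 < a k ∧ 0 < b k := by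
  induction k with
  | zero => exact ⟨ha₀, hb₀⟩
  | succ k ih => exact ⟨ha k ▸ mul_pos hp ih.2, hb k ▸ mul_pos hq ih.1⟩

lemma cross_recurrence_even (ha : ∀ k, a (k + 1) = p * b k) (hb : ∀ k, b (k + 1) = q * a k)
    (m : ℕ) : a (2 * m) = (p * q) ^ m * a 0 := by
  induction m with
  | zero => simp
  | succ m ih => rw [show 2 * (m + 1) = 2 * m + 1 + 1 by ring, ha, hb, ih]; ring

end CrossRecurrence

lemma tendsto_atBot_of_cross_affine_recurrence {p q c d : ℝ} {x y : ℕ → ℝ}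
    (hp : 0 < p) (hq : 0 < q) (hpq : 1 < p * q)
    (hx : ∀ k, x (k + 1) = p * y k + c) (hy : ∀ k, y (k + 1) = q * x k + d)
    (hx₀ : x 1 < x 0) (hy₀ : y 1 < y 0) : Tendsto x atTop atBot := by
  set a : ℕ → ℝ := fun k => x k - x (k + 1)
  set b : ℕ → ℝ := fun k => y k - y (k + 1)
  have ha : ∀ k, a (k + 1) = p * b k := fun k => by simp only [a, b, hx, hy]; ring
  have hb : ∀ k, b (k + 1) = q * a k := fun k => by simp only [a, b, hx, hy]; ring
  have hpos := pos_of_cross_recurrence hp hq ha hb (sub_pos.2 hx₀) (sub_pos.2 hy₀)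
  have hanti : StrictAnti x := strictAnti_nat_of_succ_lt fun k => sub_pos.1 (hpos k).1
  refine tendsto_atTop_atBot_of_antitone hanti.antitone fun L => ?_
  by_contra! hL
  have hstep : ∀ k, a k ≤ x 0 - L := fun k => by
    have := hanti.antitone (Nat.zero_le k)
    have := hL (k + 1)
    simp only [a]; linarith
  obtain ⟨m, hm⟩ := pow_unbounded_of_one_lt ((x 0 - L) / a 0) hpq
  have := hstep (2 * m)
  rw [cross_recurrence_even ha hb, ← le_div_iff₀ (hpos 0).1] at this
  linarith

theorem stmt13_general (p q N η : ℝ) (hp : 0 < p) (hq : 0 < q) (hpq : 1 < p * q)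
    (x y : ℕ → ℝ)
    (hx : ∀ i ≥ 2, x i = p * y (i - 1) - 2 / N + η)
    (hy : ∀ i ≥ 2, y i = q * x (i - 1) - 2 / N + η)
    (hx12 : x 1 > x 2)
    (hy12 : y 1 > y 2) :
    ∃ i₀ ≥ 2, p * y i₀ < 2 / N ∨ q * x i₀ < 2 / N := by
  by_contra! hcon
  have hx' : ∀ k, x (k + 2) = p * y (k + 1) + (η - 2 / N) := fun k => by
    rw [hx (k + 2) (by omega)]; simp only [Nat.reduceSubDiff]; ring
  have hy' : ∀ k, y (k + 2) = q * x (k + 1) + (η - 2 / N) := fun k => by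
    rw [hy (k + 2) (by omega)]; simp only [Nat.reduceSubDiff]; ring
  have htendsto := tendsto_atBot_of_cross_affine_recurrence (x := fun k => x (k + 1))
    (y := fun k => y (k + 1)) hp hq hpq hx' hy' hx12 hy12
  obtain ⟨k, hk⟩ := eventually_atTop.1 (htendsto.eventually (eventually_lt_atBot η))
  have hlt : x (k + 3) < η := hk (k + 2) (by omega)
  linarith [hx' (k + 1), (hcon (k + 2) (by omega)).1]

/-- The iteration must eventually beat the threshold `2/N`: there is `i₀ ≥ 2`
with `p/s_{i₀}'' < 2/N` or `q/s_{i₀}' < 2/N` (here `x i = 1/s_i'`, `y i = 1/s_i''`). -/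
theorem stmt13 (p q N η : ℝ) (hp : 0 < p) (hq : 0 < q) (hpq : 1 < p * q)
    (hN : 0 < N) (hη : 0 < η)
    (x y : ℕ → ℝ)
    (hx : ∀ i ≥ 2, x i = p * y (i - 1) - 2 / N + η)
    (hy : ∀ i ≥ 2, y i = q * x (i - 1) - 2 / N + η)
    (hx12 : x 1 > x 2) (hx2 : x 2 > 0)
    (hy12 : y 1 > y 2) (hy2 : y 2 > 0) :
    ∃ i₀ ≥ 2, p * y i₀ < 2 / N ∨ q * x i₀ < 2 / N :=
  stmt13_general p q N η hp hq hpq x y hx hy hx12 hy12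
end

section
/- Let p, q > 1 with pq > 1, and let I, J ≥ 0, A, B ≥ 0, and E₁, E₂ ≥ 0 satisfy J + E₁ ≤ A I^{1/q} and I + E₂ ≤ B J^{1/p}. Then J + E₁ ≤ A B^{1/q} J^{1/(pq)}, and hence, by Young's inequality with exponents pq and (pq)' = pq/(pq-1), (pq-1)J + pq·E₁ ≤ (pq-1)(A B^{1/q})^{pq/(pq-1)}. -/
/-- Nonlinear capacity estimate with initial-data terms, via Young's inequality. -/
theorem stmt17 (p q I J A B E₁ E₂ : ℝ) (hp : 1 < p) (hq : 1 < q)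
    (hI : 0 ≤ I) (hJ : 0 ≤ J) (hA : 0 ≤ A) (hB : 0 ≤ B)
    (hE₁ : 0 ≤ E₁) (hE₂ : 0 ≤ E₂)
    (h1 : J + E₁ ≤ A * I ^ (1 / q)) (h2 : I + E₂ ≤ B * J ^ (1 / p)) :
    J + E₁ ≤ A * B ^ (1 / q) * J ^ (1 / (p * q)) ∧
      (p * q - 1) * J + p * q * E₁
        ≤ (p * q - 1) * (A * B ^ (1 / q)) ^ (p * q / (p * q - 1)) := by
  have hp0 : 0 < p := lt_trans one_pos hp
  have hq0 : 0 < q := lt_trans one_pos hq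
  have hpq1 : 1 < p * q := one_lt_mul_of_lt_of_le hp hq.le
  have hpq0 : 0 < p * q := by positivity
  have hpqne : p * q ≠ 0 := ne_of_gt hpq0
  have hI' : I ≤ B * J ^ (1 / p) := le_trans (le_add_of_nonneg_right hE₂) h2
  have key : J + E₁ ≤ A * B ^ (1 / q) * J ^ (1 / (p * q)) := by
    calc J + E₁ ≤ A * I ^ (1 / q) := h1
      _ ≤ A * (B * J ^ (1 / p)) ^ (1 / q) := by
          apply mul_le_mul_of_nonneg_left _ hA
          exact Real.rpow_le_rpow hI hI' (by positivity)
      _ = A * B ^ (1 / q) * J ^ (1 / (p * q)) := by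
          rw [Real.mul_rpow hB (Real.rpow_nonneg hJ _), ← Real.rpow_mul hJ,
            mul_assoc, one_div_mul_one_div]
  refine ⟨key, ?_⟩
  have hconj : (p * q).HolderConjugate (p * q / (p * q - 1)) :=
    Real.HolderConjugate.conjExponent hpq1
  have hy := Real.young_inequality_of_nonneg (by positivity : (0:ℝ) ≤ A * B ^ (1/q))
    (Real.rpow_nonneg hJ (1 / (p * q))) hconj.symm
  have hJr : (J ^ (1 / (p * q))) ^ (p * q) = J := by
    rw [← Real.rpow_mul hJ, one_div_mul_cancel hpqne, Real.rpow_one]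
  rw [hJr] at hy
  set X := (A * B ^ (1 / q)) ^ (p * q / (p * q - 1)) with hX
  have hdiv : X / (p * q / (p * q - 1)) = X * (p * q - 1) / (p * q) := by
    field_simp
  rw [hdiv] at hy
  -- J + E₁ ≤ X*(pq-1)/(pq) + J/(pq)
  have h3 : J + E₁ ≤ X * (p * q - 1) / (p * q) + J / (p * q) := le_trans key hy
  have h4 : (p * q) * (J + E₁) ≤ X * (p * q - 1) + J := by
    have := mul_le_mul_of_nonneg_left h3 hpq0.le
    calc (p * q) * (J + E₁) ≤ (p * q) * (X * (p * q - 1) / (p * q) + J / (p * q)) := this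
      _ = X * (p * q - 1) + J := by field_simp
  linarith [h4]
end
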